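/- The number of edges added by the ZF-based augmentation algorithm depends only on n, the number of leaders m, and the size of the derived set |Δ|, and not otherwise on the topology of the input graph: the augmented graph always has exactly |Δ|(|Δ|+1)/2 − m(m+1)/2 + (m+n−|Δ|)n − n edges, provided the input graph's edge set is contained in this count's implied edge set (i.e., the algorithm's output edge count is independent of which edges G initially has, given the forcing order exists). -/

import Mathlib

/-!
When a node `u` forces, all in-neighbours of `u` are black, so the loop re-adds every original
edge into a forcing node; as `E` has no loops, every other original edge is among the incoming
edges given to the non-forcing nodes, so `E` contributes nothing of its own. A node that has
forced has no white in-neighbour left, so the forcing nodes are distinct and the edge sets added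
in the loop are disjoint; forcing from a black set of size `k` adds `k` edges, which sums to
`C(|Δ|, 2) - C(m, 2)`. The remaining `n - (|Δ| - m)` nodes receive all `n - 1` incoming edges.
-/

variable {V : Type*} [Fintype V] [DecidableEq V]

/-- The set of white (i.e., not in `B`) in-neighbors of `v` in the digraph with edge set `E`. -/
def whiteIn (E : Finset (V × V)) (B : Finset V) (v : V) : Finset V :=
  Finset.univ.filter (fun u => (u, v) ∈ E ∧ u ∉ B)

/-- Black node `u` forces the white node `v`: `v` is the unique white in-neighbor of `u`. -/
def Forces (E : Finset (V × V)) (B : Finset V) (u v : V) : Prop :=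
  u ∈ B ∧ whiteIn E B u = {v}

/-- One step of the zero forcing process. -/
def ZFStep (E : Finset (V × V)) (B B' : Finset V) : Prop :=
  ∃ u v, Forces E B u v ∧ B' = insert v B

/-- No further color change is possible. -/
def Stalled (E : Finset (V × V)) (B : Finset V) : Prop :=
  ∀ u v, ¬ Forces E B u v

/-- `B` is a derived set of input set `V'`: obtained from `V'` by zero forcing steps,
with no further step possible. -/
def IsDerived (E : Finset (V × V)) (V' B : Finset V) : Prop :=
  Relation.ReflTransGen (ZFStep E) V' B ∧ Stalled E B

/-- `ValidFrom E B L`: the list `L` of (forcing node, forced node) pairs is a valid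
zero forcing run starting from black set `B`. -/
def ValidFrom (E : Finset (V × V)) : Finset V → List (V × V) → Prop
  | _, [] => True
  | B, (u, v) :: rest => Forces E B u v ∧ ValidFrom E (insert v B) rest

/-- Black set at the end of the run `L` started from black set `B`. -/
def finalBlack : Finset V → List (V × V) → Finset V
  | B, [] => B
  | B, (_, v) :: rest => finalBlack (insert v B) rest

/-- Edges added inside the loop of the ZF-based augmentation algorithm: each time `u`
forces `v`, after coloring `v` black, add edges to `u` from all currently black nodes. -/
def augEdges : Finset V → List (V × V) → Finset (V × V)
  | _, [] => (∅ : Finset (V × V))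
  | B, (u, v) :: rest =>
      ((insert v B).erase u).image (fun w => (w, u)) ∪ augEdges (insert v B) rest

/-- The edge set returned by the ZF-based edge augmentation algorithm: the original edges,
the edges added during the forcing loop, and all incoming edges to every node that was never
used as a forcing node. -/
def zfAugment (E : Finset (V × V)) (Vl : Finset V) (L : List (V × V)) : Finset (V × V) :=
  E ∪ augEdges Vl L ∪
    Finset.univ.filter (fun p : V × V => p.1 ≠ p.2 ∧ p.2 ∉ (L.map Prod.fst).toFinset)

open Finset

lemma card_filter_ne_and_snd_notMem_add (S : Finset V) :
    #(univ.filter fun p : V × V => p.1 ≠ p.2 ∧ p.2 ∉ S) + #Sᶜ = Fintype.card V * #Sᶜ := by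
  have hoff : (univ.filter fun p : V × V => p.1 ≠ p.2 ∧ p.2 ∉ S) =
      (univ ×ˢ Sᶜ).filter fun p => p.1 ≠ p.2 := by
    ext p
    simp [and_comm]
  have hdiag : ((univ ×ˢ Sᶜ).filter fun p : V × V => ¬p.1 ≠ p.2) = Sᶜ.image fun b => (b, b) := by
    ext ⟨a, b⟩
    simp only [mem_filter, mem_product, mem_univ, true_and, not_not, mem_image, Prod.mk.injEq]
    constructor
    · rintro ⟨hb, rfl⟩
      exact ⟨a, hb, rfl, rfl⟩
    · rintro ⟨c, hc, rfl, rfl⟩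
      exact ⟨hc, rfl⟩
  calc _ = #((univ ×ˢ Sᶜ).filter fun p : V × V => p.1 ≠ p.2) +
        #((univ ×ˢ Sᶜ).filter fun p : V × V => ¬p.1 ≠ p.2) := by
        rw [hoff, hdiag, card_image_of_injective _ fun a b h => (Prod.mk.inj h).1]
    _ = Fintype.card V * #Sᶜ := by
        rw [card_filter_add_card_filter_not, card_product, card_univ]

lemma natCast_mul_succ_div_two (k : ℕ) : (k : ℤ) * (k + 1) / 2 = (k.choose 2 : ℕ) + k := by
  refine Int.ediv_eq_of_eq_mul_left two_ne_zero ?_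
  induction k with
  | zero => simp
  | succ k ih =>
    rw [Nat.choose_succ_succ', Nat.choose_one_right]
    push_cast
    linear_combination ih

namespace Forces

variable {E : Finset (V × V)} {B : Finset V} {u v : V}

lemma notMem (hf : Forces E B u v) : v ∉ B := by
  have hv : v ∈ whiteIn E B u := by rw [hf.2]; exact mem_singleton_self v
  exact (mem_filter.mp hv).2.2

lemma mem_insert_of_edge (hf : Forces E B u v) {a : V} (ha : (a, u) ∈ E) : a ∈ insert v B := by
  by_cases haB : a ∈ B
  · exact Finset.mem_insert_of_mem haB
  · have hwhite : a ∈ whiteIn E B u := by simp [whiteIn, ha, haB]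
    rw [hf.2, mem_singleton] at hwhite
    exact hwhite ▸ mem_insert_self a B

end Forces

omit [Fintype V] in
lemma snd_mem_of_mem_augEdges {B : Finset V} {L : List (V × V)} {p : V × V}
    (hp : p ∈ augEdges B L) : p.2 ∈ L.map Prod.fst := by
  induction L generalizing B with
  | nil => simp [augEdges] at hp
  | cons q rest ih =>
    obtain ⟨u, v⟩ := q
    simp only [augEdges, mem_union, mem_image] at hp
    rcases hp with ⟨w, -, rfl⟩ | hp
    · exact List.mem_cons_self
    · exact List.mem_cons_of_mem _ (ih hp)

namespace ValidFrom

variable {E : Finset (V × V)} {B : Finset V} {L : List (V × V)}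

lemma card_finalBlack (hvalid : ValidFrom E B L) : #(finalBlack B L) = #B + L.length := by
  induction L generalizing B with
  | nil => rfl
  | cons q rest ih =>
    obtain ⟨u, v⟩ := q
    obtain ⟨hf, hrest⟩ := hvalid
    rw [finalBlack, ih hrest, card_insert_of_notMem hf.notMem, List.length_cons]
    omega

lemma notMem_map_fst (hvalid : ValidFrom E B L) {u : V} (hu : ∀ a, (a, u) ∈ E → a ∈ B) :
    u ∉ L.map Prod.fst := by
  induction L generalizing B with
  | nil => simp
  | cons q rest ih =>
    obtain ⟨u', v⟩ := q
    obtain ⟨hf, hrest⟩ := hvalid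
    rw [List.map_cons, List.mem_cons, not_or]
    refine ⟨?_, ih hrest fun a ha => mem_insert_of_mem (hu a ha)⟩
    rintro rfl
    have hv : v ∈ whiteIn E B u := by rw [hf.2]; exact mem_singleton_self v
    exact hf.notMem (hu v (mem_filter.mp hv).2.1)

lemma nodup_map_fst (hvalid : ValidFrom E B L) : (L.map Prod.fst).Nodup := by
  induction L generalizing B with
  | nil => exact List.nodup_nil
  | cons q rest ih =>
    obtain ⟨u, v⟩ := q
    obtain ⟨hf, hrest⟩ := hvalid
    exact List.nodup_cons.mpr
      ⟨hrest.notMem_map_fst fun _ => hf.mem_insert_of_edge, ih hrest⟩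

lemma mem_augEdges (hvalid : ValidFrom E B L) {a b : V} (hab : (a, b) ∈ E) (hne : a ≠ b)
    (hb : b ∈ L.map Prod.fst) : (a, b) ∈ augEdges B L := by
  induction L generalizing B with
  | nil => simp at hb
  | cons q rest ih =>
    obtain ⟨u, v⟩ := q
    obtain ⟨hf, hrest⟩ := hvalid
    rw [augEdges, mem_union, mem_image]
    rcases List.mem_cons.mp hb with rfl | hb
    · exact Or.inl ⟨a, mem_erase.mpr ⟨hne, hf.mem_insert_of_edge hab⟩, rfl⟩
    · exact Or.inr (ih hrest hb)

lemma card_augEdges_add_choose (hvalid : ValidFrom E B L) :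
    #(augEdges B L) + (#B).choose 2 = (#(finalBlack B L)).choose 2 := by
  induction L generalizing B with
  | nil => simp [augEdges, finalBlack]
  | cons q rest ih =>
    obtain ⟨u, v⟩ := q
    obtain ⟨hf, hrest⟩ := hvalid
    have hdisj : Disjoint (((insert v B).erase u).image fun w => (w, u))
        (augEdges (insert v B) rest) := by
      refine disjoint_left.mpr ?_
      intro p hp hw
      obtain ⟨w, -, rfl⟩ := mem_image.mp hp
      exact hrest.notMem_map_fst (fun _ => hf.mem_insert_of_edge) (snd_mem_of_mem_augEdges hw)
    have hstep : #(((insert v B).erase u).image fun w => (w, u)) = #B := by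
      rw [card_image_of_injective _ (Prod.mk_left_injective u),
        card_erase_of_mem (mem_insert_of_mem hf.1), card_insert_of_notMem hf.notMem,
        Nat.add_sub_cancel]
    have hchoose : (#B + 1).choose 2 = #B + (#B).choose 2 := by
      rw [Nat.choose_succ_succ', Nat.choose_one_right]
    have ih' := ih hrest
    rw [card_insert_of_notMem hf.notMem, hchoose] at ih'
    rw [augEdges, finalBlack, card_union_of_disjoint hdisj, hstep, ← ih']
    ring

lemma card_zfAugment (hloop : ∀ v : V, (v, v) ∉ E) (hvalid : ValidFrom E B L) :
    #(zfAugment E B L) = #(augEdges B L) +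
      #(univ.filter fun p : V × V => p.1 ≠ p.2 ∧ p.2 ∉ (L.map Prod.fst).toFinset) := by
  have hE : E ⊆ augEdges B L ∪
      univ.filter fun p : V × V => p.1 ≠ p.2 ∧ p.2 ∉ (L.map Prod.fst).toFinset := by
    rintro ⟨a, b⟩ hab
    have hne : a ≠ b := by rintro rfl; exact hloop a hab
    by_cases hb : b ∈ L.map Prod.fst
    · exact mem_union_left _ (hvalid.mem_augEdges hab hne hb)
    · exact mem_union_right _ (by simpa [hne] using hb)
  have hdisj : Disjoint (augEdges B L)
      (univ.filter fun p : V × V => p.1 ≠ p.2 ∧ p.2 ∉ (L.map Prod.fst).toFinset) :=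
    disjoint_left.mpr fun _ hp hp' =>
      (mem_filter.mp hp').2.2 (List.mem_toFinset.mpr (snd_mem_of_mem_augEdges hp))
  rw [zfAugment, union_assoc, union_eq_right.mpr hE, card_union_of_disjoint hdisj]

end ValidFrom

theorem zfAugment_card_exact_general (E : Finset (V × V)) (Vl : Finset V) (L : List (V × V))
    (hloop : ∀ v : V, (v, v) ∉ E)
    (hvalid : ValidFrom E Vl L) :
    let n : ℤ := Fintype.card V
    let m : ℤ := Vl.card
    let D : ℤ := (finalBlack Vl L).card
    ((zfAugment E Vl L).card : ℤ) =
      D * (D + 1) / 2 - m * (m + 1) / 2 + (m + n - D) * n - n := by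
  intro n m D
  have hzf := hvalid.card_zfAugment hloop
  have haug := hvalid.card_augEdges_add_choose
  have hD := hvalid.card_finalBlack
  have hrest := card_filter_ne_and_snd_notMem_add (L.map Prod.fst).toFinset
  have hcompl : L.length + #(L.map Prod.fst).toFinsetᶜ = Fintype.card V := by
    rw [← card_add_card_compl, List.toFinset_card_of_nodup hvalid.nodup_map_fst, List.length_map]
  simp only [n, m, D, natCast_mul_succ_div_two]
  zify at hzf haug hrest hcompl hD
  rw [hzf, hD]
  linear_combination haug + hrest + ((Fintype.card V : ℤ) - 1) * hcompl

/-- The number of edges of the graph produced by the ZF-based augmentation algorithm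
depends only on `n`, the number of leaders `m`, and the size `|Δ|` of the derived set:
it always equals `|Δ|(|Δ|+1)/2 − m(m+1)/2 + (m+n−|Δ|)n − n`, independently of the
topology of the input graph. -/
theorem zfAugment_card_exact (E : Finset (V × V)) (Vl : Finset V) (L : List (V × V))
    (hloop : ∀ v : V, (v, v) ∉ E)
    (hvalid : ValidFrom E Vl L) (hstall : Stalled E (finalBlack Vl L)) :
    let n : ℤ := Fintype.card V
    let m : ℤ := Vl.card
    let D : ℤ := (finalBlack Vl L).card
    ((zfAugment E Vl L).card : ℤ) =
      D * (D + 1) / 2 - m * (m + 1) / 2 + (m + n - D) * n - n :=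
  zfAugment_card_exact_general E Vl L hloop hvalid
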